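/- arXiv:2401.13651 — 11 statements merged into one kernel-verified Lean document; each statement's English description precedes it below -/
import Mathlib

section
/- For every natural number n ≥ 3 there exists an enriched quantum logic (S, Δ) on a set S with exactly 2^n elements that is not compatibility regular; that is, there exists a finite family A_1, …, A_n of members of Δ such that every proper subfamily of {A_1, …, A_n} is compatible in Δ, but the whole family {A_1, …, A_n} is not compatible in Δ. -/
open scoped symmDiff

/-- An enriched quantum logic (EQL) on a (nonempty) set `S` (here: the type `α`):
a collection `Δ` of subsets containing the whole set and closed under symmetric
difference. -/
def IsEQL {α : Type*} (Δ : Set (Set α)) : Prop :=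
  Set.univ ∈ Δ ∧ ∀ A ∈ Δ, ∀ B ∈ Δ, A ∆ B ∈ Δ

/-- `B` is a Boolean subalgebra of the collection `Δ`: a subcollection of `Δ`
containing the whole set and closed under complements, binary unions and
binary intersections. -/
def IsBoolSub {α : Type*} (Δ B : Set (Set α)) : Prop :=
  B ⊆ Δ ∧ Set.univ ∈ B ∧ (∀ A ∈ B, Aᶜ ∈ B) ∧
    (∀ A ∈ B, ∀ C ∈ B, A ∪ C ∈ B) ∧ (∀ A ∈ B, ∀ C ∈ B, A ∩ C ∈ B)

/-- A family `M ⊆ Δ` is compatible in `Δ` if it is contained in some Boolean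
subalgebra of `Δ`. -/
def IsCompatible {α : Type*} (Δ M : Set (Set α)) : Prop :=
  ∃ B, IsBoolSub Δ B ∧ M ⊆ B

lemma even_card_symmDiff_aux {α : Type*} [DecidableEq α] {s t : Finset α}
    (hs : Even s.card) (ht : Even t.card) : Even ((s ∆ t).card) := by
  have h1 : s ∆ t = (s ∪ t) \ (s ∩ t) := by
    ext a; simp [Finset.mem_symmDiff, Finset.mem_sdiff]; tauto
  have h2 : (s ∪ t).card + (s ∩ t).card = s.card + t.card :=
    Finset.card_union_add_card_inter s t
  have h3 : ((s ∪ t) \ (s ∩ t)).card = (s ∪ t).card - (s ∩ t).card :=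
    Finset.card_sdiff_of_subset (Finset.inter_subset_union)
  have h4 : (s ∩ t).card ≤ (s ∪ t).card := Finset.card_le_card Finset.inter_subset_union
  rw [h1, h3]
  rw [Nat.even_iff] at *
  omega

lemma even_ncard_symmDiff {α : Type*} [Fintype α] {A B : Set α}
    (hA : Even A.ncard) (hB : Even B.ncard) : Even (A ∆ B).ncard := by
  classical
  rw [Set.ncard_eq_toFinset_card'] at *
  have : (A ∆ B).toFinset = A.toFinset ∆ B.toFinset := by
    ext x; simp [Set.mem_symmDiff, Finset.mem_symmDiff]
  rw [this]
  exact even_card_symmDiff_aux hA hB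

/-- A set invariant under a fixed-point-free involution (witnessed by a set `P`
that `f` maps to its complement) has even cardinality. -/
lemma even_ncard_of_involution {α : Type*} [Fintype α] {f : α → α}
    (hinv : Function.Involutive f) {X : Set α} (hX : ∀ x, x ∈ X ↔ f x ∈ X)
    {P : Set α} (hP : ∀ x, x ∈ P ↔ f x ∉ P) : Even X.ncard := by
  classical
  have himg : f '' (X ∩ P) = X ∩ Pᶜ := by
    ext y
    constructor
    · rintro ⟨x, ⟨hx, hp⟩, rfl⟩
      exact ⟨(hX x).1 hx, (hP x).1 hp⟩
    · rintro ⟨hy, hp⟩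
      exact ⟨f y, ⟨(hX y).1 hy, not_not.1 (fun h => hp ((hP y).2 h))⟩, hinv y⟩
  have hdecomp : X = (X ∩ P) ∪ (X ∩ Pᶜ) := by
    rw [← Set.inter_union_distrib_left, Set.union_compl_self, Set.inter_univ]
  have hdisj : Disjoint (X ∩ P) (X ∩ Pᶜ) :=
    Disjoint.mono Set.inter_subset_right Set.inter_subset_right disjoint_compl_right
  have hcard : (X ∩ Pᶜ).ncard = (X ∩ P).ncard := by
    rw [← himg]
    exact Set.ncard_image_of_injective _ hinv.injective
  rw [hdecomp, Set.ncard_union_eq hdisj (Set.toFinite _) (Set.toFinite _), hcard]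
  exact ⟨_, rfl⟩

lemma biInter_mem_boolsub {α ι : Type*} {Δ B : Set (Set α)} (hB : IsBoolSub Δ B)
    {A : ι → Set α} (s : Finset ι) (hA : ∀ i ∈ s, A i ∈ B) :
    (⋂ i ∈ s, A i) ∈ B := by
  classical
  induction s using Finset.induction_on with
  | empty => simpa using hB.2.1
  | @insert a s' ha ih =>
    rw [Finset.set_biInter_insert]
    exact hB.2.2.2.2 _ (hA a (Finset.mem_insert_self a s')) _
      (ih fun i hi => hA i (Finset.mem_insert_of_mem hi))

/-- For every `n ≥ 3` there is an EQL on a set with exactly `2 ^ n` elements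
that is not compatibility regular: some family `A 1, …, A n` of members of `Δ`
has every proper subfamily compatible while the whole family is not. -/
theorem stmt0 (n : ℕ) (hn : 3 ≤ n) :
    ∃ Δ : Set (Set (Fin (2 ^ n))), IsEQL Δ ∧
      ∃ A : Fin n → Set (Fin (2 ^ n)),
        (∀ i, A i ∈ Δ) ∧
        (∀ I : Set (Fin n), I ≠ Set.univ → IsCompatible Δ (A '' I)) ∧
        ¬ IsCompatible Δ (Set.range A) := by
  classical
  have hcard : Fintype.card (Fin n → Bool) = 2 ^ n := by simp
  set e : Fin (2 ^ n) ≃ (Fin n → Bool) := (Fintype.equivFinOfCardEq hcard).symm with he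
  -- the flip involution on coordinate j
  set flip : Fin n → Fin (2 ^ n) → Fin (2 ^ n) :=
    fun j x => e.symm (Function.update (e x) j (!(e x j))) with hflip
  have hflip_apply : ∀ j x i, e (flip j x) i = if i = j then !(e x i) else e x i := by
    intro j x i
    simp only [hflip, Equiv.apply_symm_apply]
    rcases eq_or_ne i j with rfl | h
    · simp [Function.update_self]
    · simp [Function.update_of_ne h, h]
  have hinv : ∀ j, Function.Involutive (flip j) := by
    intro j x
    apply e.injective
    funext i
    rw [hflip_apply, hflip_apply]
    rcases eq_or_ne i j with rfl | h <;> simp [*]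
  -- Δ = sets of even cardinality
  set Δ : Set (Set (Fin (2 ^ n))) := {X | Even X.ncard} with hΔ
  set A : Fin n → Set (Fin (2 ^ n)) := fun i => {x | e x i = true} with hA
  -- invariance under a flip gives evenness
  have key : ∀ (j : Fin n) (X : Set (Fin (2 ^ n))),
      (∀ x, x ∈ X ↔ flip j x ∈ X) → X ∈ Δ := by
    intro j X hXinv
    refine even_ncard_of_involution (hinv j) hXinv (P := A j) ?_
    intro x
    simp only [hA, Set.mem_setOf_eq, hflip_apply, if_pos rfl]
    cases h : e x j <;> simp
  refine ⟨Δ, ⟨?_, ?_⟩, A, ?_, ?_, ?_⟩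
  · -- univ ∈ Δ
    have : (Set.univ : Set (Fin (2 ^ n))).ncard = 2 ^ n := by
      simp [Set.ncard_univ]
    rw [hΔ, Set.mem_setOf_eq, this]
    exact (Nat.even_pow).2 ⟨even_two, by omega⟩
  · -- closed under symmDiff
    intro X hX Y hY
    exact even_ncard_symmDiff hX hY
  · -- each A i ∈ Δ
    intro i
    haveI : Nontrivial (Fin n) := Fin.nontrivial_iff_two_le.mpr (by omega)
    obtain ⟨j, hj⟩ := exists_ne i
    refine key j (A i) ?_
    intro x
    simp only [hA, Set.mem_setOf_eq, hflip_apply]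
    rw [if_neg (Ne.symm hj)]
  · -- proper subfamilies are compatible
    intro I hI
    have : ∃ j : Fin n, j ∉ I := by
      by_contra h
      push_neg at h
      exact hI (Set.eq_univ_of_forall h)
    obtain ⟨j, hj⟩ := this
    refine ⟨{X | ∀ x y, (∀ i ∈ I, e x i = e y i) → (x ∈ X ↔ y ∈ X)}, ⟨?_, ?_, ?_, ?_, ?_⟩, ?_⟩
    · -- ⊆ Δ
      intro X hX
      refine key j X ?_
      intro x
      exact hX x (flip j x) (fun i hi => by
        rw [hflip_apply, if_neg (by rintro rfl; exact hj hi)])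
    · intro x y _; simp
    · intro X hX x y h
      simp only [Set.mem_compl_iff]
      exact not_congr (hX x y h)
    · intro X hX Y hY x y h
      simp only [Set.mem_union]
      exact or_congr (hX x y h) (hY x y h)
    · intro X hX Y hY x y h
      simp only [Set.mem_inter_iff]
      exact and_congr (hX x y h) (hY x y h)
    · rintro _ ⟨i, hi, rfl⟩ x y h
      simp only [hA, Set.mem_setOf_eq]
      rw [h i hi]
  · -- the full family is not compatible
    rintro ⟨B, hB, hAB⟩
    have hiA : (⋂ i ∈ (Finset.univ : Finset (Fin n)), A i) ∈ B :=
      biInter_mem_boolsub hB _ (fun i _ => hAB ⟨i, rfl⟩)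
    have heq : (⋂ i ∈ (Finset.univ : Finset (Fin n)), A i)
        = {e.symm (fun _ => true)} := by
      ext x
      simp only [Finset.mem_univ, Set.iInter_true, Set.mem_iInter, hA, Set.mem_setOf_eq,
        Set.mem_singleton_iff]
      constructor
      · intro h
        apply e.injective
        rw [Equiv.apply_symm_apply]
        funext i
        exact h i
      · rintro rfl i
        simp
    rw [heq] at hiA
    have := hB.1 hiA
    rw [hΔ, Set.mem_setOf_eq, Set.ncard_singleton] at this
    exact (Nat.not_even_one) this
end

section
/- Let n ≥ 1, let S = {0,1}^n (the set of functions from Fin n to {0,1}), let Δ be the collection of all subsets of S of even cardinality, and for each i let A_i = {x ∈ S : x(i) = 1}. Then every subfamily of {A_1, …, A_n} with strictly fewer than n elements is compatible in Δ: the Boolean subalgebra of subsets of S generated by such a subfamily is contained in Δ. -/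
open scoped symmDiff

/-- The Boolean subalgebra of subsets generated by a family `M` of subsets. -/
inductive BoolGen {α : Type*} (M : Set (Set α)) : Set α → Prop
  | base {A : Set α} : A ∈ M → BoolGen M A
  | univ : BoolGen M Set.univ
  | compl {A : Set α} : BoolGen M A → BoolGen M Aᶜ
  | union {A B : Set α} : BoolGen M A → BoolGen M B → BoolGen M (A ∪ B)
  | inter {A B : Set α} : BoolGen M A → BoolGen M B → BoolGen M (A ∩ B)

/-!
Pick a coordinate `j` outside `I` and let `f` flip the `j`-th bit. Every `A i` with `i ∈ I` is
`f`-invariant, hence so is every set in the Boolean algebra they generate. A finite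
`f`-invariant set `X` splits into its parts with `x j = true` and `x j = false`, which `f`
exchanges, so `X` has even cardinality.
-/

namespace BoolGen

variable {α : Type*} {M : Set (Set α)}

theorem preimage_eq {f : α → α} (hM : ∀ A ∈ M, f ⁻¹' A = A) {X : Set α} (hX : BoolGen M X) :
    f ⁻¹' X = X := by
  induction hX with
  | base hA => exact hM _ hA
  | univ => rfl
  | compl _ ih => rw [Set.preimage_compl, ih]
  | union _ _ ih₁ ih₂ => rw [Set.preimage_union, ih₁, ih₂]
  | inter _ _ ih₁ ih₂ => rw [Set.preimage_inter, ih₁, ih₂]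

theorem isCompatible {Δ : Set (Set α)} (hΔ : ∀ X, BoolGen M X → X ∈ Δ) : IsCompatible Δ M :=
  ⟨{X | BoolGen M X}, ⟨hΔ, univ, fun _ => compl, fun _ hA _ hC => union hA hC,
    fun _ hA _ hC => inter hA hC⟩, fun _ => base⟩

end BoolGen

theorem Set.even_ncard_of_involutive_preimage_eq {α : Type*} {f : α → α} {X T : Set α}
    (hX : X.Finite) (hf : Function.Involutive f) (hfT : f ⁻¹' T = Tᶜ) (hfX : f ⁻¹' X = X) :
    Even X.ncard := by
  have hswap : f '' (X ∩ T) = X \ T := by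
    rw [Set.image_eq_preimage_of_inverse hf.leftInverse hf.rightInverse, Set.preimage_inter,
      hfX, hfT, Set.sdiff_eq]
  have hcard : (X \ T).ncard = (X ∩ T).ncard := by
    rw [← hswap, Set.ncard_image_of_injective _ hf.injective]
  rw [← Set.ncard_inter_add_ncard_sdiff_eq_ncard X T hX, hcard]
  exact ⟨_, rfl⟩

section FlipCoord

variable {ι : Type*} [DecidableEq ι]

def flipCoord (j : ι) (x : ι → Bool) : ι → Bool :=
  Function.update x j (!x j)

theorem flipCoord_involutive (j : ι) : Function.Involutive (flipCoord j) := by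
  intro x
  ext k
  by_cases hk : k = j
  · subst hk; simp [flipCoord]
  · simp [flipCoord, Function.update_of_ne hk]

theorem preimage_flipCoord_setOf_self (j : ι) :
    flipCoord j ⁻¹' {x | x j = true} = {x | x j = true}ᶜ := by
  ext x
  simp [flipCoord]

theorem preimage_flipCoord_setOf_of_ne {i j : ι} (hij : i ≠ j) :
    flipCoord j ⁻¹' {x | x i = true} = {x | x i = true} := by
  ext x
  simp [flipCoord, Function.update_of_ne hij]

end FlipCoord

theorem stmt2_general (n : ℕ)
    (Δ : Set (Set (Fin n → Bool))) (hΔ : Δ = {X : Set (Fin n → Bool) | Even X.ncard})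
    (A : Fin n → Set (Fin n → Bool)) (hA : ∀ i, A i = {x : Fin n → Bool | x i = true}) :
    ∀ I : Finset (Fin n), I.card < n →
      (∀ X : Set (Fin n → Bool), BoolGen (A '' ↑I) X → X ∈ Δ) ∧
        IsCompatible Δ (A '' ↑I) := by
  intro I hI
  obtain ⟨j, hj⟩ : ∃ j, j ∉ I := by
    by_contra! hall
    simpa using (Finset.card_le_card fun j (_ : j ∈ Finset.univ) => hall j).trans_lt hI
  have hgen : ∀ B ∈ A '' ↑I, flipCoord j ⁻¹' B = B := by
    rintro _ ⟨i, hi, rfl⟩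
    rw [hA i, preimage_flipCoord_setOf_of_ne (ne_of_mem_of_not_mem hi hj)]
  have heven : ∀ X, BoolGen (A '' ↑I) X → X ∈ Δ := fun X hX => by
    rw [hΔ]
    exact Set.even_ncard_of_involutive_preimage_eq X.toFinite (flipCoord_involutive j)
      (preimage_flipCoord_setOf_self j) (hX.preimage_eq hgen)
  exact ⟨heven, BoolGen.isCompatible heven⟩

/-- For `S = {0,1}ⁿ` (`n ≥ 1`), `Δ` the even-cardinality subsets of `S`, and
`A i = {x | x i = 1}`: every subfamily of `{A 1, …, A n}` with strictly fewer
than `n` members generates a Boolean subalgebra contained in `Δ`, and hence is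
compatible in `Δ`. -/
theorem stmt2 (n : ℕ) (hn : 1 ≤ n)
    (Δ : Set (Set (Fin n → Bool))) (hΔ : Δ = {X : Set (Fin n → Bool) | Even X.ncard})
    (A : Fin n → Set (Fin n → Bool)) (hA : ∀ i, A i = {x : Fin n → Bool | x i = true}) :
    ∀ I : Finset (Fin n), I.card < n →
      (∀ X : Set (Fin n → Bool), BoolGen (A '' ↑I) X → X ∈ Δ) ∧
        IsCompatible Δ (A '' ↑I) :=
  stmt2_general n Δ hΔ A hA
end

section
/- Let n ≥ 3, let S = {0,1}^n (the set of functions from Fin n to {0,1}), let Δ be the collection of all subsets of S of even cardinality, and for each i let A_i = {x ∈ S : x(i) = 1}. Then the family {A_1, …, A_n} is not compatible in Δ: there is no Boolean subalgebra of Δ containing all of A_1, …, A_n. Indeed, the intersection ⋂_{i ≤ n} A_i is a singleton and hence does not belong to Δ. -/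
open scoped symmDiff

theorem IsBoolSub.iInter_mem {α ι : Type*} [Finite ι] {Δ B : Set (Set α)} (hB : IsBoolSub Δ B)
    {s : ι → Set α} (hs : ∀ i, s i ∈ B) : ⋂ i, s i ∈ B := by
  have := Fintype.ofFinite ι
  rw [← Set.iInf_eq_iInter, ← Finset.inf_univ_eq_iInf]
  exact Finset.inf_induction hB.2.1 hB.2.2.2.2 fun i _ => hs i

theorem not_isCompatible_range_of_iInter_notMem {α ι : Type*} [Finite ι] {Δ : Set (Set α)}
    {A : ι → Set α} (h : ⋂ i, A i ∉ Δ) : ¬ IsCompatible Δ (Set.range A) := by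
  rintro ⟨B, hB, hAB⟩
  exact h (hB.1 (hB.iInter_mem fun i => hAB ⟨i, rfl⟩))

theorem iInter_setOf_apply_eq {ι β : Type*} (b : β) :
    ⋂ i : ι, {x : ι → β | x i = b} = {fun _ => b} := by
  ext x
  simp [funext_iff]

theorem stmt3_general (n : ℕ)
    (Δ : Set (Set (Fin n → Bool))) (hΔ : Δ = {X : Set (Fin n → Bool) | Even X.ncard})
    (A : Fin n → Set (Fin n → Bool)) (hA : ∀ i, A i = {x : Fin n → Bool | x i = true}) :
    (∃ p : Fin n → Bool, (⋂ i, A i) = {p}) ∧ (⋂ i, A i) ∉ Δ ∧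
      ¬ IsCompatible Δ (Set.range A) := by
  have hsingleton : ⋂ i, A i = {fun _ => true} := by
    simp only [hA, iInter_setOf_apply_eq]
  have hnotMem : ⋂ i, A i ∉ Δ := by
    simp [hsingleton, hΔ]
  exact ⟨⟨_, hsingleton⟩, hnotMem, not_isCompatible_range_of_iInter_notMem hnotMem⟩

/-- For `S = {0,1}ⁿ` (`n ≥ 3`), `Δ` the even-cardinality subsets of `S`, and
`A i = {x | x i = 1}`: the intersection of the `A i` is a singleton, it does
not belong to `Δ`, and the whole family `{A 1, …, A n}` is not compatible
in `Δ`. -/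
theorem stmt3 (n : ℕ) (hn : 3 ≤ n)
    (Δ : Set (Set (Fin n → Bool))) (hΔ : Δ = {X : Set (Fin n → Bool) | Even X.ncard})
    (A : Fin n → Set (Fin n → Bool)) (hA : ∀ i, A i = {x : Fin n → Bool | x i = true}) :
    (∃ p : Fin n → Bool, (⋂ i, A i) = {p}) ∧ (⋂ i, A i) ∉ Δ ∧
      ¬ IsCompatible Δ (Set.range A) :=
  stmt3_general n Δ hΔ A hA
end

section
/- Let (S, Δ) be an enriched quantum logic, let s be a state on (S, Δ), and let B ∈ Δ with s(B) = 0. Then s(A △ B) = s(A) for every A ∈ Δ. -/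
open scoped symmDiff

/-- A state on an EQL `(S, Δ)`: a `[0,1]`-valued map, normalized, additive on
disjoint pairs of `Δ`, and subadditive with respect to symmetric difference. -/
def IsState {α : Type*} (Δ : Set (Set α)) (s : Set α → ℝ) : Prop :=
  (∀ A ∈ Δ, s A ∈ Set.Icc (0 : ℝ) 1) ∧ s Set.univ = 1 ∧
    (∀ A ∈ Δ, ∀ B ∈ Δ, A ∩ B = ∅ → s (A ∪ B) = s A + s B) ∧
    (∀ A ∈ Δ, ∀ B ∈ Δ, s (A ∆ B) ≤ s A + s B)

namespace IsState

variable {α : Type*} {Δ : Set (Set α)} {s : Set α → ℝ} {A B : Set α}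

theorem symmDiff_le_add (hs : IsState Δ s) (hA : A ∈ Δ) (hB : B ∈ Δ) :
    s (A ∆ B) ≤ s A + s B :=
  hs.2.2.2 A hA B hB

theorem le_symmDiff_add (hΔ : IsEQL Δ) (hs : IsState Δ s) (hA : A ∈ Δ) (hB : B ∈ Δ) :
    s A ≤ s (A ∆ B) + s B := by
  simpa only [symmDiff_symmDiff_cancel_right] using
    hs.symmDiff_le_add (hΔ.2 A hA B hB) hB

theorem abs_symmDiff_sub_le (hΔ : IsEQL Δ) (hs : IsState Δ s) (hA : A ∈ Δ) (hB : B ∈ Δ) :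
    |s (A ∆ B) - s A| ≤ s B :=
  abs_sub_le_iff.2
    ⟨by linarith [hs.symmDiff_le_add hA hB], by linarith [hs.le_symmDiff_add hΔ hA hB]⟩

end IsState

/-- If `s` is a state on an EQL `(S, Δ)` and `B ∈ Δ` has `s B = 0`, then
`s (A ∆ B) = s A` for every `A ∈ Δ`. -/
theorem stmt7 {α : Type*} (Δ : Set (Set α)) (hΔ : IsEQL Δ)
    (s : Set α → ℝ) (hs : IsState Δ s)
    (B : Set α) (hB : B ∈ Δ) (hB0 : s B = 0) :
    ∀ A ∈ Δ, s (A ∆ B) = s A := by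
  intro A hA
  have h := hs.abs_symmDiff_sub_le hΔ hA hB
  rwa [hB0, abs_nonpos_iff, sub_eq_zero] at h
end

section
/- Let S be a nonempty set and let Δ' ⊆ Δ be two enriched quantum logics on S such that Δ' is moreover a Boolean algebra of sets (closed under complements in S, binary unions and binary intersections, with S ∈ Δ'). Then every state s on (S, Δ') can be extended to a state on (S, Δ); that is, there exists a state t on (S, Δ) with t(A) = s(A) for all A ∈ Δ'. -/
open scoped symmDiff

/-- `Δ` is a Boolean algebra of subsets of `S`. -/
def IsBoolAlgOfSets {α : Type*} (Δ : Set (Set α)) : Prop :=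
  Set.univ ∈ Δ ∧ (∀ A ∈ Δ, Aᶜ ∈ Δ) ∧
    (∀ A ∈ Δ, ∀ B ∈ Δ, A ∪ B ∈ Δ) ∧ (∀ A ∈ Δ, ∀ B ∈ Δ, A ∩ B ∈ Δ)

/-!
Send each set to its indicator function in the space of bounded real functions. On indicators
of sets of `Δ'`, `s` integrates simple functions, and this integral is positive: splitting along
one set at a time shows that a simple function bounded below by `M` on `T ∈ Δ'` integrates over
`T` to at least `M * s T`. Since every bounded function is dominated by a multiple of `1`,
M. Riesz's extension theorem extends the integral to a positive linear functional `g` on all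
bounded functions. Then `t A := g 1_A` is finitely additive on all subsets of `α` and satisfies
`t (A ∆ B) ≤ t A + t B` because `1_{A ∆ B} ≤ 1_A + 1_B`, so it is a state on any `Δ`.
-/

namespace IsBoolAlgOfSets

variable {α : Type*} {Δ : Set (Set α)}

theorem empty_mem (hΔ : IsBoolAlgOfSets Δ) : ∅ ∈ Δ := by
  simpa using hΔ.2.1 _ hΔ.1

theorem inter_mem (hΔ : IsBoolAlgOfSets Δ) {A B : Set α} (hA : A ∈ Δ) (hB : B ∈ Δ) :
    A ∩ B ∈ Δ :=
  hΔ.2.2.2 _ hA _ hB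

theorem diff_mem (hΔ : IsBoolAlgOfSets Δ) {A B : Set α} (hA : A ∈ Δ) (hB : B ∈ Δ) :
    A \ B ∈ Δ :=
  hΔ.inter_mem hA (hΔ.2.1 _ hB)

end IsBoolAlgOfSets

namespace IsState

variable {α : Type*} {Δ : Set (Set α)} {s : Set α → ℝ}

theorem nonneg (hs : IsState Δ s) {A : Set α} (hA : A ∈ Δ) : 0 ≤ s A :=
  (hs.1 A hA).1

theorem map_empty (hs : IsState Δ s) (h : ∅ ∈ Δ) : s ∅ = 0 := by
  have := hs.2.2.1 ∅ h ∅ h (Set.inter_self ∅)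
  rw [Set.union_self] at this
  linarith

theorem map_inter_add_map_diff (hs : IsState Δ s) (hΔ : IsBoolAlgOfSets Δ) {T A : Set α}
    (hT : T ∈ Δ) (hA : A ∈ Δ) : s (T ∩ A) + s (T \ A) = s T := by
  rw [← hs.2.2.1 _ (hΔ.inter_mem hT hA) _ (hΔ.diff_mem hT hA), Set.inter_union_sdiff]
  exact Set.disjoint_iff_inter_eq_empty.1
    (Set.disjoint_sdiff_right.mono_left Set.inter_subset_right)

theorem mul_le_sum_mul_inter (hs : IsState Δ s) (hΔ : IsBoolAlgOfSets Δ) {ι : Type*}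
    (A : ι → Set α) (c : ι → ℝ) (I : Finset ι) (hA : ∀ i ∈ I, A i ∈ Δ) {T : Set α}
    (hT : T ∈ Δ) {M : ℝ} (hM : ∀ x ∈ T, M ≤ ∑ i ∈ I, c i * (A i).indicator 1 x) :
    M * s T ≤ ∑ i ∈ I, c i * s (A i ∩ T) := by
  classical
  induction I using Finset.induction_on generalizing T M with
  | empty =>
    rcases T.eq_empty_or_nonempty with rfl | ⟨x, hx⟩
    · simp [hs.map_empty hΔ.empty_mem]
    · simpa using mul_nonpos_of_nonpos_of_nonneg (by simpa using hM x hx) (hs.nonneg hT)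
  | insert j I hj ih =>
    have hAj : A j ∈ Δ := hA j (Finset.mem_insert_self j I)
    have hAI : ∀ i ∈ I, A i ∈ Δ := fun i hi => hA i (Finset.mem_insert_of_mem hi)
    have hin : (M - c j) * s (T ∩ A j) ≤ ∑ i ∈ I, c i * s (A i ∩ (T ∩ A j)) := by
      refine ih hAI (hΔ.inter_mem hT hAj) fun x hx => ?_
      have := hM x hx.1
      rw [Finset.sum_insert hj, Set.indicator_of_mem hx.2] at this
      simp only [Pi.one_apply, mul_one] at this
      linarith
    have hout : M * s (T \ A j) ≤ ∑ i ∈ I, c i * s (A i ∩ (T \ A j)) := by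
      refine ih hAI (hΔ.diff_mem hT hAj) fun x hx => ?_
      simpa [Finset.sum_insert hj, Set.indicator_of_notMem hx.2] using hM x hx.1
    have hsplit : ∀ i ∈ I,
        s (A i ∩ T) = s (A i ∩ (T ∩ A j)) + s (A i ∩ (T \ A j)) := fun i hi => by
      rw [← Set.inter_assoc, ← Set.inter_sdiff_assoc,
        hs.map_inter_add_map_diff hΔ (hΔ.inter_mem (hAI i hi) hT) hAj]
    have hsum : ∑ i ∈ I, c i * s (A i ∩ T) =
        ∑ i ∈ I, c i * s (A i ∩ (T ∩ A j)) + ∑ i ∈ I, c i * s (A i ∩ (T \ A j)) := by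
      rw [← Finset.sum_add_distrib]
      exact Finset.sum_congr rfl fun i hi => by rw [hsplit i hi, mul_add]
    calc M * s T = (M - c j) * s (T ∩ A j) + M * s (T \ A j) + c j * s (T ∩ A j) := by
          rw [← hs.map_inter_add_map_diff hΔ hT hAj]; ring
      _ ≤ ∑ i ∈ I, c i * s (A i ∩ (T ∩ A j)) + ∑ i ∈ I, c i * s (A i ∩ (T \ A j))
          + c j * s (T ∩ A j) := by gcongr
      _ = ∑ i ∈ insert j I, c i * s (A i ∩ T) := by
          rw [Finset.sum_insert hj, hsum, Set.inter_comm (A j) T]; ring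

theorem linearCombination_nonneg (hs : IsState Δ s) (hΔ : IsBoolAlgOfSets Δ) (l : Δ →₀ ℝ)
    (hl : 0 ≤ Finsupp.linearCombination ℝ
      (fun A : Δ => (A : Set α).indicator (1 : α → ℝ)) l) :
    0 ≤ Finsupp.linearCombination ℝ (fun A : Δ => s A) l := by
  have key := hs.mul_le_sum_mul_inter hΔ (fun A : Δ => (A : Set α)) l l.support
    (fun A _ => A.2) hΔ.1 (M := 0) fun x _ => by
      simpa [Finsupp.linearCombination_apply, Finsupp.sum] using hl x
  simpa [Finsupp.linearCombination_apply, Finsupp.sum] using key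

end IsState

theorem riesz_extension_along {M E : Type*} [AddCommGroup M] [Module ℝ M] [AddCommGroup E]
    [Module ℝ E] (K : PointedCone ℝ E) (φ : M →ₗ[ℝ] E) (ψ : M →ₗ[ℝ] ℝ)
    (nonneg : ∀ m, φ m ∈ K → 0 ≤ ψ m) (dense : ∀ y, ∃ m, φ m + y ∈ K) :
    ∃ g : E →ₗ[ℝ] ℝ, g ∘ₗ φ = ψ ∧ ∀ x ∈ K, 0 ≤ g x := by
  have hker : LinearMap.ker φ ≤ LinearMap.ker ψ := fun m hm => by
    rw [LinearMap.mem_ker] at hm ⊢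
    have h₁ := nonneg m (by simp [hm])
    have h₂ := nonneg (-m) (by simp [hm])
    rw [map_neg] at h₂
    linarith
  let f : E →ₗ.[ℝ] ℝ :=
    ⟨LinearMap.range φ,
      (LinearMap.ker φ).liftQ ψ hker ∘ₗ φ.quotKerEquivRange.symm.toLinearMap⟩
  have hf : ∀ m, f ⟨φ m, φ.mem_range_self m⟩ = ψ m := fun m => by
    simp [f, LinearMap.quotKerEquivRange_symm_apply_image]
  obtain ⟨g, hgf, hgK⟩ := riesz_extension K f
    (by rintro ⟨_, m, rfl⟩ hm; exact (hf m).symm ▸ nonneg m hm)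
    (fun y => let ⟨m, hm⟩ := dense y; ⟨⟨φ m, φ.mem_range_self m⟩, hm⟩)
  exact ⟨g, LinearMap.ext fun m => (hgf ⟨φ m, φ.mem_range_self m⟩).trans (hf m), hgK⟩

def boundedFunctions (α : Type*) : Submodule ℝ (α → ℝ) where
  carrier := {f | ∃ C, ∀ x, |f x| ≤ C}
  add_mem' := by
    rintro f g ⟨C, hC⟩ ⟨D, hD⟩
    exact ⟨C + D, fun x => (abs_add_le _ _).trans (add_le_add (hC x) (hD x))⟩
  zero_mem' := ⟨0, fun x => by simp⟩
  smul_mem' := by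
    rintro c f ⟨C, hC⟩
    exact ⟨|c| * C, fun x => by
      rw [Pi.smul_apply, smul_eq_mul, abs_mul]
      exact mul_le_mul_of_nonneg_left (hC x) (abs_nonneg c)⟩

namespace boundedFunctions

variable {α : Type*}

noncomputable def indicator (A : Set α) : boundedFunctions α :=
  ⟨A.indicator 1, 1, fun x => by by_cases hx : x ∈ A <;> simp [hx]⟩

@[simp]
theorem coe_indicator (A : Set α) : (indicator A : α → ℝ) = A.indicator 1 := rfl

theorem exists_add_nonneg (f : boundedFunctions α) :
    ∃ C : ℝ, ∀ x, 0 ≤ C + (f : α → ℝ) x := by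
  obtain ⟨C, hC⟩ := f.2
  exact ⟨C, fun x => neg_le_iff_add_nonneg'.1 (neg_le_of_abs_le (hC x))⟩

theorem isState_of_nonneg (Δ : Set (Set α)) (g : boundedFunctions α →ₗ[ℝ] ℝ)
    (hg : ∀ f, 0 ≤ f → 0 ≤ g f) (hg_univ : g (indicator Set.univ) = 1) :
    IsState Δ fun A => g (indicator A) := by
  have hmono : ∀ f₁ f₂, f₁ ≤ f₂ → g f₁ ≤ g f₂ := fun f₁ f₂ h => by
    simpa using hg (f₂ - f₁) (sub_nonneg.2 h)
  refine ⟨fun A _ => ⟨hg _ ?_, ?_⟩, hg_univ, fun A _ B _ hAB => ?_, fun A _ B _ => ?_⟩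
  · exact Set.indicator_nonneg fun _ _ => zero_le_one
  · exact hg_univ ▸ hmono _ _ (Set.indicator_le_indicator_of_subset (Set.subset_univ A)
      fun _ => zero_le_one)
  · rw [← map_add]
    exact congrArg g (Subtype.ext
      (Set.indicator_union_of_disjoint (Set.disjoint_iff_inter_eq_empty.2 hAB) 1))
  · rw [← map_add]
    refine hmono _ _ fun x => ?_
    by_cases hA : x ∈ A <;> by_cases hB : x ∈ B <;> simp [Set.mem_symmDiff, hA, hB]

end boundedFunctions

theorem stmt10_general {α : Type*} (Δ' Δ : Set (Set α))
    (hbool : IsBoolAlgOfSets Δ')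
    (s : Set α → ℝ) (hs : IsState Δ' s) :
    ∃ t : Set α → ℝ, IsState Δ t ∧ ∀ A ∈ Δ', t A = s A := by
  let φ : (Δ' →₀ ℝ) →ₗ[ℝ] boundedFunctions α :=
    Finsupp.linearCombination ℝ fun A => boundedFunctions.indicator A
  let ψ : (Δ' →₀ ℝ) →ₗ[ℝ] ℝ := Finsupp.linearCombination ℝ fun A => s A
  have hφ (l) : (φ l : α → ℝ) =
      Finsupp.linearCombination ℝ (fun A : Δ' => (A : Set α).indicator (1 : α → ℝ)) l :=
    Finsupp.apply_linearCombination ℝ (boundedFunctions α).subtype _ l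
  obtain ⟨g, hgφ, hg⟩ := riesz_extension_along
    ((PointedCone.positive ℝ (α → ℝ)).comap (boundedFunctions α).subtype) φ ψ
    (fun l hl => hs.linearCombination_nonneg hbool l (hφ l ▸ hl))
    (fun f => let ⟨C, hC⟩ := boundedFunctions.exists_add_nonneg f
      ⟨Finsupp.single ⟨_, hbool.1⟩ C, fun x => by simpa [φ] using hC x⟩)
  have hext : ∀ A ∈ Δ', g (boundedFunctions.indicator A) = s A := fun A hA => by
    simpa [φ, ψ] using LinearMap.congr_fun hgφ (Finsupp.single ⟨A, hA⟩ 1)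
  exact ⟨_, boundedFunctions.isState_of_nonneg Δ g hg ((hext _ hbool.1).trans hs.2.1), hext⟩

/-- If `Δ' ⊆ Δ` are EQLs on `S` and `Δ'` is moreover a Boolean algebra of
sets, then any state on `(S, Δ')` extends to a state on `(S, Δ)`. -/
theorem stmt10 {α : Type*} [Nonempty α] (Δ' Δ : Set (Set α))
    (hsub : Δ' ⊆ Δ) (h' : IsEQL Δ') (h : IsEQL Δ) (hbool : IsBoolAlgOfSets Δ')
    (s : Set α → ℝ) (hs : IsState Δ' s) :
    ∃ t : Set α → ℝ, IsState Δ t ∧ ∀ A ∈ Δ', t A = s A :=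
  stmt10_general Δ' Δ hbool s hs
end

section
/- Let (S, Δ) be an enriched quantum logic and let s : Δ → [0,1] satisfy s(S) = 1 and s(A ∪ B) = s(A) + s(B) whenever A, B ∈ Δ are disjoint. If s is subadditive, i.e., for all A, B ∈ Δ there exists C ∈ Δ with A ∪ B ⊆ C and s(A) + s(B) ≥ s(C), then s is a state: s(A △ B) ≤ s(A) + s(B) for all A, B ∈ Δ. -/
open scoped symmDiff

/-!
For `D ⊆ C` in `Δ` we have `C = D ∪ (D ∆ C)` disjointly, so additivity and nonnegativity make `s`
monotone on `Δ`. Since `A ∆ B ⊆ A ∪ B ⊆ C`, this gives `s (A ∆ B) ≤ s C ≤ s A + s B`.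
-/

section SymmDiffClosed

variable {α : Type*} {Δ : Set (Set α)}

theorem sdiff_mem_of_symmDiff_closed (hΔ : ∀ A ∈ Δ, ∀ B ∈ Δ, A ∆ B ∈ Δ) {D C : Set α}
    (hD : D ∈ Δ) (hC : C ∈ Δ) (hDC : D ⊆ C) :
    C \ D ∈ Δ := by
  simpa only [symmDiff_of_le hDC] using hΔ D hD C hC

theorem monotoneOn_of_additive_of_nonneg (hΔ : ∀ A ∈ Δ, ∀ B ∈ Δ, A ∆ B ∈ Δ)
    {s : Set α → ℝ} (hnonneg : ∀ A ∈ Δ, 0 ≤ s A)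
    (hadd : ∀ A ∈ Δ, ∀ B ∈ Δ, A ∩ B = ∅ → s (A ∪ B) = s A + s B) :
    MonotoneOn s Δ := by
  intro D hD C hC hDC
  have hCD : C \ D ∈ Δ := sdiff_mem_of_symmDiff_closed hΔ hD hC hDC
  have hsplit : s C = s D + s (C \ D) := by
    simpa only [Set.union_sdiff_cancel hDC] using
      hadd D hD (C \ D) hCD (Set.inter_sdiff_self D C)
  linarith [hnonneg _ hCD]

end SymmDiffClosed

/-- A subadditive state is a state: if `s : Δ → [0,1]` is normalized, additive
on disjoint pairs, and for all `A, B ∈ Δ` there is `C ∈ Δ` with `A ∪ B ⊆ C`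
and `s A + s B ≥ s C`, then `s` is a state. -/
theorem stmt12 {α : Type*} (Δ : Set (Set α)) (hΔ : IsEQL Δ)
    (s : Set α → ℝ)
    (hrange : ∀ A ∈ Δ, s A ∈ Set.Icc (0 : ℝ) 1)
    (huniv : s Set.univ = 1)
    (hadd : ∀ A ∈ Δ, ∀ B ∈ Δ, A ∩ B = ∅ → s (A ∪ B) = s A + s B)
    (hsubadd : ∀ A ∈ Δ, ∀ B ∈ Δ, ∃ C ∈ Δ, A ∪ B ⊆ C ∧ s C ≤ s A + s B) :
    IsState Δ s := by
  have hmono : MonotoneOn s Δ :=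
    monotoneOn_of_additive_of_nonneg hΔ.2 (fun A hA => (hrange A hA).1) hadd
  refine ⟨hrange, huniv, hadd, fun A hA B hB => ?_⟩
  obtain ⟨C, hC, hABC, hsC⟩ := hsubadd A hA B hB
  calc s (A ∆ B) ≤ s C := hmono (hΔ.2 A hA B hB) hC (symmDiff_le_sup.trans hABC)
    _ ≤ s A + s B := hsC
end

section
/- Let (S, Δ) be an enriched quantum logic such that S is (at most) countable and Δ is not Boolean, i.e., there exist A, B ∈ Δ with A ∪ B ∉ Δ. Then there exists a state s on (S, Δ) that is not subadditive: there exist A, B ∈ Δ such that no C ∈ Δ satisfies both A ∪ B ⊆ C and s(A) + s(B) ≥ s(C). -/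
open scoped symmDiff

open scoped ENNReal
open MeasureTheory

/-!
Pick `A, B ∈ Δ` with `A ∪ B ∉ Δ` and, enumerating the countable set `S`, a probability
measure `μ` with point masses `2⁻ⁿ` (normalized) off `A ∩ B` and none on it. Every probability
measure is a state. As `μ (A ∩ B) = 0`, `μ A + μ B = μ (A ∪ B)`; a `C ∈ Δ` containing `A ∪ B`
cannot equal it, so it contains a point outside `A ∩ B`, of positive mass, and
`μ C > μ A + μ B`.
-/

theorem isState_measureReal {α : Type*} [MeasurableSpace α] (Δ : Set (Set α))
    (μ : Measure α) [IsProbabilityMeasure μ] (hΔ : ∀ A ∈ Δ, MeasurableSet A) :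
    IsState Δ μ.real := by
  refine ⟨fun A _ => ⟨measureReal_nonneg, measureReal_le_one⟩, probReal_univ,
    fun A _ B hB hAB => measureReal_union (Set.disjoint_iff_inter_eq_empty.mpr hAB) (hΔ B hB),
    fun A _ B _ => ?_⟩
  calc μ.real (A ∆ B) ≤ μ.real (A ∪ B) := measureReal_mono symmDiff_le_sup
    _ ≤ μ.real A + μ.real B := measureReal_union_le A B

theorem measureReal_add_lt_of_union_subset {α : Type*} [MeasurableSpace α] {μ : Measure α}
    [IsFiniteMeasure μ] {A B C : Set α} (hA : MeasurableSet A) (hB : MeasurableSet B)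
    (hC : MeasurableSet C) (hAB : μ (A ∩ B) = 0) (hABC : A ∪ B ⊆ C)
    (hdiff : μ (C \ (A ∪ B)) ≠ 0) :
    μ.real A + μ.real B < μ.real C :=
  calc μ.real A + μ.real B = μ.real (A ∪ B) := by
        rw [← measureReal_union_add_inter hB,
          (measureReal_eq_zero_iff (measure_ne_top μ _)).mpr hAB, add_zero]
    _ < μ.real (A ∪ B) + μ.real (C \ (A ∪ B)) :=
        lt_add_of_pos_right _ (ENNReal.toReal_pos hdiff (measure_ne_top μ _))
    _ = μ.real C := by
        rw [← measureReal_union Set.disjoint_sdiff_right (hC.diff (hA.union hB)),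
          Set.union_sdiff_cancel hABC]

theorem PMF.exists_support_eq {α : Type*} [Countable α] {T : Set α} (hT : T.Nonempty) :
    ∃ p : PMF α, p.support = T := by
  obtain ⟨e, he⟩ := Countable.exists_injective_nat α
  set f : α → ℝ≥0∞ := T.indicator fun x => 2⁻¹ ^ e x
  have hf0 : ∑' x, f x ≠ 0 := by
    obtain ⟨t, ht⟩ := hT
    intro h
    simpa [f, ht] using ENNReal.tsum_eq_zero.mp h t
  have hftop : ∑' x, f x ≠ ∞ := by
    refine ne_top_of_le_ne_top (b := ∑' n : ℕ, 2⁻¹ ^ n) ?_ ?_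
    · simp [ENNReal.tsum_geometric]
    · calc ∑' x, f x ≤ ∑' x, 2⁻¹ ^ e x := ENNReal.tsum_le_tsum (Set.indicator_le_self _ _)
        _ ≤ ∑' n : ℕ, 2⁻¹ ^ n := ENNReal.tsum_comp_le_tsum_of_injective he _
  refine ⟨PMF.normalize f hf0 hftop, ?_⟩
  rw [PMF.support_normalize]
  ext x
  by_cases hx : x ∈ T <;> simp [f, hx]

theorem stmt14_general {α : Type*} [Countable α]
    (Δ : Set (Set α)) (hΔ : IsEQL Δ)
    (hnotbool : ∃ A ∈ Δ, ∃ B ∈ Δ, A ∪ B ∉ Δ) :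
    ∃ s : Set α → ℝ, IsState Δ s ∧
      ∃ A ∈ Δ, ∃ B ∈ Δ, ¬ ∃ C ∈ Δ, A ∪ B ⊆ C ∧ s C ≤ s A + s B := by
  obtain ⟨A, hA, B, hB, hAB⟩ := hnotbool
  let _ : MeasurableSpace α := ⊤
  have hT : (A ∩ B)ᶜ.Nonempty := by
    refine Set.nonempty_compl.mpr fun h => hAB ?_
    have hAuniv : A = Set.univ := Set.eq_univ_of_univ_subset (h ▸ Set.inter_subset_left)
    have hBuniv : B = Set.univ := Set.eq_univ_of_univ_subset (h ▸ Set.inter_subset_right)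
    simpa [hAuniv, hBuniv] using hΔ.1
  obtain ⟨p, hp⟩ := PMF.exists_support_eq hT
  have hnull : ∀ X, p.toMeasure X = 0 ↔ Disjoint (A ∩ B)ᶜ X := fun X => by
    rw [p.toMeasure_apply_eq_zero_iff .of_discrete, hp]
  refine ⟨p.toMeasure.real, isState_measureReal Δ _ fun _ _ => .of_discrete, A, hA, B, hB, ?_⟩
  rintro ⟨C, hC, hABC, hle⟩
  obtain ⟨x, hxC, hxAB⟩ := Set.exists_of_ssubset <|
    hABC.ssubset_of_ne (by rintro rfl; exact hAB hC)
  refine hle.not_gt (measureReal_add_lt_of_union_subset .of_discrete .of_discrete .of_discrete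
    ((hnull _).mpr disjoint_compl_left) hABC fun h => ?_)
  exact ((hnull _).mp h).ne_of_mem (fun hx => hxAB (Or.inl hx.1)) ⟨hxC, hxAB⟩ rfl

/-- If `S` is (at most) countable and the EQL `(S, Δ)` is not Boolean (some
union of two members of `Δ` is not in `Δ`), then there is a state on `(S, Δ)`
that is not subadditive. -/
theorem stmt14 {α : Type*} [Countable α] [Nonempty α]
    (Δ : Set (Set α)) (hΔ : IsEQL Δ)
    (hnotbool : ∃ A ∈ Δ, ∃ B ∈ Δ, A ∪ B ∉ Δ) :
    ∃ s : Set α → ℝ, IsState Δ s ∧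
      ∃ A ∈ Δ, ∃ B ∈ Δ, ¬ ∃ C ∈ Δ, A ∪ B ⊆ C ∧ s C ≤ s A + s B :=
  stmt14_general Δ hΔ hnotbool
end

section
/- Let S be a nonempty set and let Δ' ⊆ Δ be two enriched quantum logics on S (both contain S and are closed under set symmetric difference). Let s : Δ' → ℤ/2ℤ be a ℤ₂-state on (S, Δ'), i.e., s(S) = 1 and s(A △ B) = s(A) + s(B) for all A, B ∈ Δ'. Then s can be extended to a ℤ₂-state on (S, Δ): there exists t : Δ → ℤ/2ℤ with t(S) = 1, t(A △ B) = t(A) + t(B) for all A, B ∈ Δ, and t(A) = s(A) for all A ∈ Δ'. -/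
open scoped symmDiff

/-- A `ℤ₂`-state on an EQL `(S, Δ)`: a `ℤ/2ℤ`-valued map with `s S = 1` and
`s (A ∆ B) = s A + s B` for all `A, B ∈ Δ`. -/
def IsZ2State {α : Type*} (Δ : Set (Set α)) (s : Set α → ZMod 2) : Prop :=
  s Set.univ = 1 ∧ ∀ A ∈ Δ, ∀ B ∈ Δ, s (A ∆ B) = s A + s B

namespace EQLExt

variable {α : Type*}

open Classical in
/-- Indicator function of a set, valued in `ZMod 2`. -/
noncomputable def toFun (A : Set α) : α → ZMod 2 := fun a => if a ∈ A then 1 else 0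

/-- Set of points where a `ZMod 2`-valued function equals `1`. -/
def ofFun (x : α → ZMod 2) : Set α := {a | x a = 1}

lemma zmod2_cases (c : ZMod 2) : c = 0 ∨ c = 1 := by revert c; decide

lemma ofFun_toFun (A : Set α) : ofFun (toFun A) = A := by
  ext a
  by_cases ha : a ∈ A <;> simp [ofFun, toFun, ha]

lemma toFun_ofFun (x : α → ZMod 2) : toFun (ofFun x) = x := by
  funext a
  rcases zmod2_cases (x a) with hx | hx <;>
    simp [toFun, ofFun, hx]

lemma toFun_symmDiff (A B : Set α) : toFun (A ∆ B) = toFun A + toFun B := by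
  funext a
  by_cases ha : a ∈ A <;> by_cases hb : a ∈ B <;>
    simp [toFun, Set.mem_symmDiff, ha, hb] <;> decide

lemma ofFun_add (x y : α → ZMod 2) : ofFun (x + y) = ofFun x ∆ ofFun y := by
  have := toFun_symmDiff (ofFun x) (ofFun y)
  rw [toFun_ofFun, toFun_ofFun] at this
  rw [← this, ofFun_toFun]

lemma ofFun_zero : ofFun (0 : α → ZMod 2) = (∅ : Set α) := by
  ext a; simp [ofFun]

/-- The subspace of `α → ZMod 2` corresponding to an EQL `Δ'`. -/
def P (Δ' : Set (Set α)) (h' : IsEQL Δ') : Submodule (ZMod 2) (α → ZMod 2) where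
  carrier := {x | ofFun x ∈ Δ'}
  zero_mem' := by
    have : (∅ : Set α) ∈ Δ' := by
      have := h'.2 Set.univ h'.1 Set.univ h'.1
      simpa using this
    simpa [ofFun_zero] using this
  add_mem' := by
    intro x y hx hy
    simpa [ofFun_add] using h'.2 _ hx _ hy
  smul_mem' := by
    intro c x hx
    rcases zmod2_cases c with hc | hc
    · subst hc
      have : (∅ : Set α) ∈ Δ' := by
        have := h'.2 Set.univ h'.1 Set.univ h'.1
        simpa using this
      simpa [ofFun_zero] using this
    · subst hc
      simpa using hx

theorem stmt15_aux (Δ' : Set (Set α)) (h' : IsEQL Δ')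
    (s : Set α → ZMod 2) (hs : IsZ2State Δ' s) :
    ∃ t : Set α → ZMod 2, t Set.univ = 1 ∧
      (∀ A B : Set α, t (A ∆ B) = t A + t B) ∧ ∀ A ∈ Δ', t A = s A := by
  -- linear functional on the subspace
  let f : P Δ' h' →ₗ[ZMod 2] ZMod 2 :=
    { toFun := fun x => s (ofFun x.1)
      map_add' := by
        intro x y
        have := hs.2 _ x.2 _ y.2
        simpa [ofFun_add] using this
      map_smul' := by
        intro c x
        rcases zmod2_cases c with hc | hc
        · subst hc
          have h0 : s (∅ : Set α) = 0 := by
            have := hs.2 Set.univ h'.1 Set.univ h'.1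
            have h2 : (Set.univ : Set α) ∆ Set.univ = ∅ := by simp
            rw [h2, hs.1] at this
            -- this : s ∅ = 1 + 1
            exact this.trans (by decide)
          simp [ofFun_zero, h0]
        · subst hc
          simp }
  obtain ⟨g, hg⟩ := f.exists_extend
  refine ⟨fun A => g (toFun A), ?_, ?_, ?_⟩
  · have hu : toFun (Set.univ : Set α) ∈ P Δ' h' := by
      simpa [P, ofFun_toFun] using h'.1
    have := congrFun (congrArg (fun m => m.toFun) hg) ⟨toFun (Set.univ : Set α), hu⟩
    calc g (toFun (Set.univ : Set α)) = f ⟨_, hu⟩ := this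
      _ = s (ofFun (toFun (Set.univ : Set α))) := rfl
      _ = 1 := by rw [ofFun_toFun, hs.1]
  · intro A B
    show g (toFun (A ∆ B)) = g (toFun A) + g (toFun B)
    rw [toFun_symmDiff, map_add]
  · intro A hA
    have hmem : toFun A ∈ P Δ' h' := by
      simpa [P, ofFun_toFun] using hA
    have := congrFun (congrArg (fun m => m.toFun) hg) ⟨toFun A, hmem⟩
    calc g (toFun A) = f ⟨_, hmem⟩ := this
      _ = s (ofFun (toFun A)) := rfl
      _ = s A := by rw [ofFun_toFun]

end EQLExt

/-- Any `ℤ₂`-state on a sub-EQL `(S, Δ')` of an EQL `(S, Δ)` extends to a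
`ℤ₂`-state on `(S, Δ)`. -/
theorem stmt15 {α : Type*} (Δ' Δ : Set (Set α))
    (hsub : Δ' ⊆ Δ) (h' : IsEQL Δ') (h : IsEQL Δ)
    (s : Set α → ZMod 2) (hs : IsZ2State Δ' s) :
    ∃ t : Set α → ZMod 2, IsZ2State Δ t ∧ ∀ A ∈ Δ', t A = s A := by
  obtain ⟨t, ht1, ht2, ht3⟩ := EQLExt.stmt15_aux Δ' h' s hs
  exact ⟨t, ⟨ht1, fun A _ B _ => ht2 A B⟩, ht3⟩
end

section
/- There exists an enriched quantum logic (S, Δ) on a set S with 10 elements and a map s : Δ → {0,1} such that: (i) s is a state on (S, Δ); (ii) s is a ℤ₂-state on (S, Δ) (identifying {0,1} with ℤ/2ℤ); (iii) s has no extension to a two-valued finitely additive state on the full power set of S, i.e., there is no t : exp S → {0,1} with t(S) = 1, t additive on disjoint unions, and t(A) = s(A) for all A ∈ Δ; and (iv) s does have an extension to a ℤ₂-state on the full power set of S. Such an example is obtained with S = {1,…,10} and Δ generated (under symmetric difference, together with S) by the sets A = {2,3,4,5}, B = {4,6,8,9}, C = {1,2,4,8}, D = {4,5,6,7}. -/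
/-! The witness is the parity `s(X) = |X ∩ {0, 1, 4}| mod 2`, a `ℤ₂`-state on the whole power
set since `{0, 1, 4}` has odd size.
Its real-valued version is additive on `Δ` because no two disjoint sets of `Δ` both meet
`{0, 1, 4}` oddly: a finite check over the 32 sets of `Δ`, encoded as 10-bit masks.
A two-valued additive map on the power set takes the value `1` on intersections of sets of
value `1`, yet `A`, `A △ B △ S` and `A △ C` have value `1` and empty intersection. -/

open scoped symmDiff

/-- The collection generated by a family `M` of subsets together with the
whole set, under symmetric difference. -/
inductive SDGen {α : Type*} (M : Set (Set α)) : Set α → Prop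
  | base {A : Set α} : A ∈ M → SDGen M A
  | univ : SDGen M Set.univ
  | sdiff {A B : Set α} : SDGen M A → SDGen M B → SDGen M (A ∆ B)

section General

variable {α : Type*}

theorem isEQL_setOf_sdGen (M : Set (Set α)) : IsEQL {X | SDGen M X} :=
  ⟨.univ, fun _ hA _ hB => .sdiff hA hB⟩

noncomputable def parityOn (T : Finset α) (X : Set α) : ZMod 2 :=
  ∑ i ∈ T, X.indicator 1 i

theorem parityOn_symmDiff (T : Finset α) (X Y : Set α) :
    parityOn T (X ∆ Y) = parityOn T X + parityOn T Y := by
  classical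
  rw [parityOn, parityOn, parityOn, ← Finset.sum_add_distrib]
  refine Finset.sum_congr rfl fun i _ => ?_
  by_cases hX : i ∈ X <;> by_cases hY : i ∈ Y <;>
    simp [Set.mem_symmDiff, hX, hY, CharTwo.add_self_eq_zero]

theorem parityOn_univ (T : Finset α) : parityOn T Set.univ = T.card := by
  simp [parityOn]

theorem isZ2State_parityOn {T : Finset α} (hT : Odd T.card) (Δ : Set (Set α)) :
    IsZ2State Δ (parityOn T) :=
  ⟨by rw [parityOn_univ, ZMod.natCast_eq_one_iff_odd.mpr hT],
    fun X _ Y _ => parityOn_symmDiff T X Y⟩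

theorem isState_val_of_isZ2State {Δ : Set (Set α)} {v : Set α → ZMod 2} (hv : IsZ2State Δ v)
    (hdisj : ∀ X ∈ Δ, ∀ Y ∈ Δ, Disjoint X Y → v X = 0 ∨ v Y = 0) :
    IsState Δ (fun X => ((v X).val : ℝ)) := by
  refine ⟨fun X _ => ⟨by positivity, ?_⟩, ?_, fun X hX Y hY hXY => ?_, fun X hX Y hY => ?_⟩ <;>
    dsimp only
  · exact_mod_cast Nat.le_of_lt_succ (ZMod.val_lt (v X))
  · simp [hv.1, ZMod.val_one]
  · have hXY' : Disjoint X Y := Set.disjoint_iff_inter_eq_empty.mpr hXY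
    have hunion : X ∪ Y = X ∆ Y := hXY'.symmDiff_eq_sup.symm
    rw [hunion, hv.2 X hX Y hY]
    rcases hdisj X hX Y hY hXY' with h | h <;> simp [h]
  · rw [hv.2 X hX Y hY]
    exact_mod_cast ZMod.val_add_le (v X) (v Y)

theorem eq_one_inter_of_twoValued {t : Set α → ℝ} (ht01 : ∀ X, t X = 0 ∨ t X = 1)
    (htadd : ∀ X Y, X ∩ Y = ∅ → t (X ∪ Y) = t X + t Y) {X Y : Set α} (hX : t X = 1)
    (hY : t Y = 1) : t (X ∩ Y) = 1 := by
  have hsplit : t X = t (X ∩ Y) + t (X \ Y) := by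
    rw [← htadd _ _ (by rw [Set.inter_assoc, Set.inter_sdiff_self, Set.inter_empty]),
      Set.inter_union_sdiff]
  have hunion : t (X ∪ Y) = t (X \ Y) + t Y := by
    rw [← htadd _ _ Set.sdiff_inter_self, Set.sdiff_union_self]
  rcases ht01 (X ∩ Y) with h | h
  · rcases ht01 (X ∪ Y) with h' | h' <;> linarith
  · exact h

theorem eq_zero_empty_of_additive {t : Set α → ℝ}
    (htadd : ∀ X Y, X ∩ Y = ∅ → t (X ∪ Y) = t X + t Y) : t ∅ = 0 := by
  have h := htadd ∅ ∅ (Set.inter_empty ∅)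
  rw [Set.union_empty] at h
  linarith

theorem not_exists_twoValued_extension {Δ : Set (Set α)} {s : Set α → ℝ} {X Y Z : Set α}
    (hX : X ∈ Δ) (hY : Y ∈ Δ) (hZ : Z ∈ Δ) (hsX : s X = 1) (hsY : s Y = 1) (hsZ : s Z = 1)
    (hXYZ : X ∩ Y ∩ Z = ∅) :
    ¬ ∃ t : Set α → ℝ, t Set.univ = 1 ∧ (∀ X, t X = 0 ∨ t X = 1) ∧
      (∀ X Y, X ∩ Y = ∅ → t (X ∪ Y) = t X + t Y) ∧ ∀ X ∈ Δ, t X = s X := by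
  rintro ⟨t, -, ht01, htadd, hts⟩
  have h := eq_one_inter_of_twoValued ht01 htadd
    (eq_one_inter_of_twoValued ht01 htadd (hsX ▸ hts X hX) (hsY ▸ hts Y hY)) (hsZ ▸ hts Z hZ)
  rw [hXYZ, eq_zero_empty_of_additive htadd] at h
  exact zero_ne_one h

end General

namespace TenPoints

def ofMask (n : ℕ) : Set (Fin 10) := {i | n.testBit i}

theorem ofMask_symmDiff (m n : ℕ) : ofMask m ∆ ofMask n = ofMask (m ^^^ n) := by
  ext i
  simp only [ofMask, Set.mem_symmDiff, Set.mem_ofPred_eq, Nat.testBit_xor]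
  cases m.testBit i <;> cases n.testBit i <;> simp

theorem ofMask_inter (m n : ℕ) : ofMask m ∩ ofMask n = ofMask (m &&& n) := by
  ext i
  simp [ofMask, Nat.testBit_and]

theorem ofMask_zero : ofMask 0 = ∅ := by
  ext i
  simp [ofMask]

theorem univ_eq_ofMask : (Set.univ : Set (Fin 10)) = ofMask 1023 := by
  ext i
  fin_cases i <;> simp [ofMask] <;> decide

def generators : Set (Set (Fin 10)) := {{2, 3, 4, 5}, {4, 6, 8, 9}, {1, 2, 4, 8}, {4, 5, 6, 7}}

theorem generators_eq : generators = ofMask '' {60, 848, 278, 240} := by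
  simp only [generators, Set.image_insert_eq, Set.image_singleton]
  congr <;> ext i <;> fin_cases i <;> simp [ofMask] <;> decide

def codeMasks : List ℕ := [0, 60, 95, 99, 147, 175, 204, 240, 278, 298, 329, 373, 389, 441,
  474, 486, 537, 549, 582, 634, 650, 694, 725, 745, 783, 819, 848, 876, 924, 928, 963, 1023]

theorem xor_mem_codeMasks : ∀ m ∈ codeMasks, ∀ n ∈ codeMasks, m ^^^ n ∈ codeMasks := by
  decide

theorem exists_mem_codeMasks_of_sdGen {X : Set (Fin 10)} (hX : SDGen generators X) :
    ∃ n ∈ codeMasks, X = ofMask n := by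
  induction hX with
  | base hA =>
    rw [generators_eq] at hA
    obtain ⟨n, hn, rfl⟩ := hA
    exact ⟨n, by rcases hn with rfl | rfl | rfl | rfl <;> decide, rfl⟩
  | univ => exact ⟨1023, by decide, univ_eq_ofMask⟩
  | sdiff _ _ ihA ihB =>
    obtain ⟨m, hm, rfl⟩ := ihA
    obtain ⟨n, hn, rfl⟩ := ihB
    exact ⟨m ^^^ n, xor_mem_codeMasks m hm n hn, ofMask_symmDiff m n⟩

theorem sdGen_ofMask_xor {m n : ℕ} (hm : SDGen generators (ofMask m))
    (hn : SDGen generators (ofMask n)) : SDGen generators (ofMask (m ^^^ n)) :=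
  ofMask_symmDiff m n ▸ .sdiff hm hn

theorem sdGen_ofMask_generator {n : ℕ} (hn : n ∈ ({60, 848, 278, 240} : Set ℕ)) :
    SDGen generators (ofMask n) :=
  .base (generators_eq ▸ ⟨n, hn, rfl⟩)

def oddPoints : Finset (Fin 10) := {0, 1, 4}

theorem parityOn_ofMask (T : Finset (Fin 10)) (n : ℕ) :
    parityOn T (ofMask n) = ∑ i ∈ T, if n.testBit i then 1 else 0 := by
  simp [parityOn, ofMask, Set.indicator_apply]

theorem parityOn_ofMask_eq_zero_of_and_eq_zero : ∀ m ∈ codeMasks, ∀ n ∈ codeMasks,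
    (∀ i : Fin 10, (m &&& n).testBit i = false) →
      parityOn oddPoints (ofMask m) = 0 ∨ parityOn oddPoints (ofMask n) = 0 := by
  simp only [parityOn_ofMask]
  decide

theorem parityOn_eq_zero_of_disjoint {X Y : Set (Fin 10)} (hX : SDGen generators X)
    (hY : SDGen generators Y) (hXY : Disjoint X Y) :
    parityOn oddPoints X = 0 ∨ parityOn oddPoints Y = 0 := by
  obtain ⟨m, hm, rfl⟩ := exists_mem_codeMasks_of_sdGen hX
  obtain ⟨n, hn, rfl⟩ := exists_mem_codeMasks_of_sdGen hY
  refine parityOn_ofMask_eq_zero_of_and_eq_zero m hm n hn fun i => ?_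
  rw [Set.disjoint_iff_inter_eq_empty, ofMask_inter, Set.eq_empty_iff_forall_notMem] at hXY
  simpa [ofMask] using hXY i

theorem exists_odd_sets_inter_eq_empty : ∃ X Y Z : Set (Fin 10),
    SDGen generators X ∧ SDGen generators Y ∧ SDGen generators Z ∧
    parityOn oddPoints X = 1 ∧ parityOn oddPoints Y = 1 ∧ parityOn oddPoints Z = 1 ∧
    X ∩ Y ∩ Z = ∅ := by
  have hU : SDGen generators (ofMask 1023) := univ_eq_ofMask ▸ .univ
  have hA := sdGen_ofMask_generator (n := 60) (by simp)
  have hB := sdGen_ofMask_generator (n := 848) (by simp)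
  have hC := sdGen_ofMask_generator (n := 278) (by simp)
  refine ⟨_, _, _, hA, sdGen_ofMask_xor (sdGen_ofMask_xor hA hB) hU, sdGen_ofMask_xor hA hC,
    ?_, ?_, ?_, ?_⟩
  all_goals simp only [parityOn_ofMask, ofMask_inter]
  · decide
  · decide
  · decide
  · convert ofMask_zero using 2
    decide

end TenPoints

/-- On a ten-element set `S = {1, …, 10}`, the EQL `Δ` generated by
`A = {2,3,4,5}`, `B = {4,6,8,9}`, `C = {1,2,4,8}`, `D = {4,5,6,7}` carries a
two-valued state `s` which is simultaneously a `ℤ₂`-state (via the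
identification of `{0,1}` with `ℤ/2ℤ`), such that `s` has no extension to a
two-valued finitely additive state on the power set of `S`, while its
`ℤ₂`-state companion does extend to a `ℤ₂`-state on the power set of `S`. -/
theorem stmt16 :
    ∃ Δ : Set (Set (Fin 10)),
      Δ = {X : Set (Fin 10) |
            SDGen ({{2, 3, 4, 5}, {4, 6, 8, 9}, {1, 2, 4, 8}, {4, 5, 6, 7}} :
              Set (Set (Fin 10))) X} ∧
      IsEQL Δ ∧
      ∃ (s : Set (Fin 10) → ℝ) (s₂ : Set (Fin 10) → ZMod 2),
        (∀ X ∈ Δ, (s X = 0 ∧ s₂ X = 0) ∨ (s X = 1 ∧ s₂ X = 1)) ∧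
        IsState Δ s ∧
        IsZ2State Δ s₂ ∧
        (¬ ∃ t : Set (Fin 10) → ℝ, t Set.univ = 1 ∧
            (∀ X : Set (Fin 10), t X = 0 ∨ t X = 1) ∧
            (∀ X Y : Set (Fin 10), X ∩ Y = ∅ → t (X ∪ Y) = t X + t Y) ∧
            ∀ X ∈ Δ, t X = s X) ∧
        (∃ v : Set (Fin 10) → ZMod 2, v Set.univ = 1 ∧
            (∀ X Y : Set (Fin 10), v (X ∆ Y) = v X + v Y) ∧
            ∀ X ∈ Δ, v X = s₂ X) := by
  open TenPoints in
  have hodd : Odd oddPoints.card := by decide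
  have hZ2 := isZ2State_parityOn hodd {X | SDGen generators X}
  obtain ⟨X, Y, Z, hX, hY, hZ, hvX, hvY, hvZ, hXYZ⟩ := exists_odd_sets_inter_eq_empty
  refine ⟨{X | SDGen generators X}, rfl, isEQL_setOf_sdGen _,
    fun X => ((parityOn oddPoints X).val : ℝ), parityOn oddPoints, fun X _ => ?_,
    isState_val_of_isZ2State hZ2 fun X hX Y hY => parityOn_eq_zero_of_disjoint hX hY, hZ2,
    not_exists_twoValued_extension hX hY hZ ?_ ?_ ?_ hXYZ,
    parityOn oddPoints, hZ2.1, parityOn_symmDiff oddPoints, fun X _ => rfl⟩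
  · rcases (by decide : ∀ z : ZMod 2, z = 0 ∨ z = 1) (parityOn oddPoints X) with h | h <;>
      simp only [h, ZMod.val_zero, ZMod.val_one, Nat.cast_zero, Nat.cast_one] <;> simp
  all_goals simp [hvX, hvY, hvZ, ZMod.val_one]
end

section
/- Let L be a bounded lattice equipped with a map x ↦ xᶜ that is involutive ((xᶜ)ᶜ = x), antitone (x ≤ y implies yᶜ ≤ xᶜ), and satisfies x ⊓ xᶜ = ⊥ for all x, and with a binary operation △ : L × L → L satisfying (GEQL1) x △ (y △ z) = (x △ y) △ z, (GEQL2) x △ ⊤ = xᶜ and ⊤ △ x = xᶜ, and (GEQL3) x ≤ z and y ≤ z imply x △ y ≤ z. Then the identities x △ ⊥ = x, ⊥ △ x = x, and x △ x = ⊥ hold for all x ∈ L. -/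
/-!
Complementation is translation by `⊤` on either side, so `⊤ ∆ ⊤ = ⊤ᶜ = ⊥` and associativity give
`x ∆ ⊥ = (x ∆ ⊤) ∆ ⊤ = xᶜᶜ = x`, and symmetrically on the left. Conjugating by `⊤` turns
`x ∆ x` into `xᶜ ∆ xᶜ`, so by (GEQL3) the element `x ∆ x` lies below both `x` and `xᶜ`,
whose meet is `⊥`.
-/

namespace GEQL

variable {L : Type*} [Lattice L] [BoundedOrder L] {oc : L → L} {sd : L → L → L}

lemma oc_top (h_compl : ∀ x : L, x ⊓ oc x = ⊥) : oc ⊤ = ⊥ := by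
  simpa using h_compl ⊤

lemma sd_top_top (h_compl : ∀ x : L, x ⊓ oc x = ⊥) (h_right : ∀ x : L, sd x ⊤ = oc x) :
    sd ⊤ ⊤ = ⊥ := by
  rw [h_right, oc_top h_compl]

lemma sd_bot_right (h_inv : ∀ x : L, oc (oc x) = x) (h_compl : ∀ x : L, x ⊓ oc x = ⊥)
    (h_assoc : ∀ x y z : L, sd x (sd y z) = sd (sd x y) z)
    (h_right : ∀ x : L, sd x ⊤ = oc x) (x : L) : sd x ⊥ = x := by
  rw [← sd_top_top h_compl h_right, h_assoc, h_right, h_right, h_inv]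

lemma sd_bot_left (h_inv : ∀ x : L, oc (oc x) = x) (h_compl : ∀ x : L, x ⊓ oc x = ⊥)
    (h_assoc : ∀ x y z : L, sd x (sd y z) = sd (sd x y) z)
    (h_left : ∀ x : L, sd ⊤ x = oc x) (h_right : ∀ x : L, sd x ⊤ = oc x) (x : L) :
    sd ⊥ x = x := by
  rw [← sd_top_top h_compl h_right, ← h_assoc, h_left, h_left, h_inv]

lemma sd_self_eq_sd_oc_self (h_inv : ∀ x : L, oc (oc x) = x)
    (h_assoc : ∀ x y z : L, sd x (sd y z) = sd (sd x y) z)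
    (h_left : ∀ x : L, sd ⊤ x = oc x) (h_right : ∀ x : L, sd x ⊤ = oc x) (x : L) :
    sd x x = sd (oc x) (oc x) := by
  calc sd x x = sd (sd ⊤ (oc x)) (sd (oc x) ⊤) := by rw [h_left, h_right, h_inv]
    _ = sd ⊤ (sd (sd (oc x) (oc x)) ⊤) := by rw [h_assoc, h_assoc, h_assoc]
    _ = sd (oc x) (oc x) := by rw [h_right, h_left, h_inv]

lemma sd_self (h_inv : ∀ x : L, oc (oc x) = x) (h_compl : ∀ x : L, x ⊓ oc x = ⊥)
    (h_assoc : ∀ x y z : L, sd x (sd y z) = sd (sd x y) z)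
    (h_left : ∀ x : L, sd ⊤ x = oc x) (h_right : ∀ x : L, sd x ⊤ = oc x)
    (h_le : ∀ x y z : L, x ≤ z → y ≤ z → sd x y ≤ z) (x : L) : sd x x = ⊥ := by
  have h_le_x : sd x x ≤ x := h_le x x x le_rfl le_rfl
  have h_le_oc : sd x x ≤ oc x := by
    rw [sd_self_eq_sd_oc_self h_inv h_assoc h_left h_right]
    exact h_le _ _ _ le_rfl le_rfl
  exact le_bot_iff.mp (h_compl x ▸ le_inf h_le_x h_le_oc)

end GEQL

theorem stmt17_general {L : Type*} [Lattice L] [BoundedOrder L]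
    (oc : L → L) (sd : L → L → L)
    (h_inv : ∀ x : L, oc (oc x) = x)
    (h_compl : ∀ x : L, x ⊓ oc x = ⊥)
    (hGEQL1 : ∀ x y z : L, sd x (sd y z) = sd (sd x y) z)
    (hGEQL2 : ∀ x : L, sd x ⊤ = oc x ∧ sd ⊤ x = oc x)
    (hGEQL3 : ∀ x y z : L, x ≤ z → y ≤ z → sd x y ≤ z) :
    ∀ x : L, sd x ⊥ = x ∧ sd ⊥ x = x ∧ sd x x = ⊥ := by
  have h_right x := (hGEQL2 x).1
  have h_left x := (hGEQL2 x).2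
  exact fun x => ⟨GEQL.sd_bot_right h_inv h_compl hGEQL1 h_right x,
    GEQL.sd_bot_left h_inv h_compl hGEQL1 h_left h_right x,
    GEQL.sd_self h_inv h_compl hGEQL1 h_left h_right hGEQL3 x⟩

/-- In a bounded lattice with an orthocomplementation `oc` (involutive,
antitone, `x ⊓ oc x = ⊥`) and a symmetric-difference operation `sd` satisfying
(GEQL1)–(GEQL3), one has `x ∆ ⊥ = x`, `⊥ ∆ x = x` and `x ∆ x = ⊥`. -/
theorem stmt17 {L : Type*} [Lattice L] [BoundedOrder L]
    (oc : L → L) (sd : L → L → L)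
    (h_inv : ∀ x : L, oc (oc x) = x)
    (h_anti : ∀ x y : L, x ≤ y → oc y ≤ oc x)
    (h_compl : ∀ x : L, x ⊓ oc x = ⊥)
    (hGEQL1 : ∀ x y z : L, sd x (sd y z) = sd (sd x y) z)
    (hGEQL2 : ∀ x : L, sd x ⊤ = oc x ∧ sd ⊤ x = oc x)
    (hGEQL3 : ∀ x y z : L, x ≤ z → y ≤ z → sd x y ≤ z) :
    ∀ x : L, sd x ⊥ = x ∧ sd ⊥ x = x ∧ sd x x = ⊥ :=
  stmt17_general oc sd h_inv h_compl hGEQL1 hGEQL2 hGEQL3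
end

section
/- Let L be a bounded lattice equipped with a map x ↦ xᶜ that is involutive ((xᶜ)ᶜ = x), antitone (x ≤ y implies yᶜ ≤ xᶜ), and satisfies x ⊓ xᶜ = ⊥ for all x, and with a binary operation △ : L × L → L satisfying (GEQL1) x △ (y △ z) = (x △ y) △ z, (GEQL2) x △ ⊤ = xᶜ and ⊤ △ x = xᶜ, and (GEQL3) x ≤ z and y ≤ z imply x △ y ≤ z. Then L is orthomodular: for all x, y ∈ L with x ≤ y one has y = x ⊔ (y ⊓ xᶜ). -/
/-!
Since `⊤ △ u = uᶜ = u △ ⊤`, associativity moves the complement through `△`: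
`(u △ v)ᶜ = uᶜ △ v = u △ vᶜ`, hence `u △ v = uᶜ △ vᶜ`. Then `a △ a` lies below both `a` and
`aᶜ`, so `a △ a = ⊥`, and `⊥ = ⊤ᶜ` is a unit. For `x ≤ y` put `d = x △ y`: it lies below `y`
and, as `xᶜ △ yᶜ` with `yᶜ ≤ xᶜ`, below `xᶜ`; and `y = (x △ x) △ y = x △ d ≤ x ⊔ (y ⊓ xᶜ)`.
-/

section GEQL

variable {L : Type*} (oc : L → L) (sd : L → L → L)

theorem oc_sd_eq_sd_oc_left [Top L] (hassoc : ∀ x y z, sd x (sd y z) = sd (sd x y) z)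
    (htop_sd : ∀ x, sd ⊤ x = oc x) (u v : L) : oc (sd u v) = sd (oc u) v := by
  rw [← htop_sd, hassoc, htop_sd]

theorem oc_sd_eq_sd_oc_right [Top L] (hassoc : ∀ x y z, sd x (sd y z) = sd (sd x y) z)
    (hsd_top : ∀ x, sd x ⊤ = oc x) (u v : L) : oc (sd u v) = sd u (oc v) := by
  rw [← hsd_top, ← hassoc, hsd_top]

theorem sd_oc_oc [Top L] (hinv : ∀ x, oc (oc x) = x)
    (hassoc : ∀ x y z, sd x (sd y z) = sd (sd x y) z)
    (hsd_top : ∀ x, sd x ⊤ = oc x) (htop_sd : ∀ x, sd ⊤ x = oc x) (u v : L) :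
    sd (oc u) (oc v) = sd u v := by
  rw [← oc_sd_eq_sd_oc_left oc sd hassoc htop_sd, ← oc_sd_eq_sd_oc_right oc sd hassoc hsd_top,
    hinv]

theorem oc_top_eq_bot [SemilatticeInf L] [BoundedOrder L] (hcompl : ∀ x : L, x ⊓ oc x = ⊥) :
    oc ⊤ = ⊥ := by
  simpa using hcompl ⊤

theorem sd_bot_left [SemilatticeInf L] [BoundedOrder L] (hinv : ∀ x, oc (oc x) = x)
    (hcompl : ∀ x : L, x ⊓ oc x = ⊥) (hassoc : ∀ x y z, sd x (sd y z) = sd (sd x y) z)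
    (htop_sd : ∀ x, sd ⊤ x = oc x) (a : L) : sd ⊥ a = a := by
  rw [← oc_top_eq_bot oc hcompl, ← oc_sd_eq_sd_oc_left oc sd hassoc htop_sd, htop_sd, hinv]

theorem sd_self [SemilatticeInf L] [BoundedOrder L] (hinv : ∀ x, oc (oc x) = x)
    (hcompl : ∀ x : L, x ⊓ oc x = ⊥) (hassoc : ∀ x y z, sd x (sd y z) = sd (sd x y) z)
    (hsd_top : ∀ x, sd x ⊤ = oc x) (htop_sd : ∀ x, sd ⊤ x = oc x)
    (hsd_le : ∀ x y z : L, x ≤ z → y ≤ z → sd x y ≤ z) (a : L) : sd a a = ⊥ := by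
  have h_le_oc : sd a a ≤ oc a := by
    rw [← sd_oc_oc oc sd hinv hassoc hsd_top htop_sd]
    exact hsd_le _ _ _ le_rfl le_rfl
  exact le_bot_iff.mp (hcompl a ▸ le_inf (hsd_le a a a le_rfl le_rfl) h_le_oc)

end GEQL

/-- A bounded lattice with an orthocomplementation `oc` (involutive, antitone,
`x ⊓ oc x = ⊥`) and a symmetric-difference operation `sd` satisfying
(GEQL1)–(GEQL3) is orthomodular: `x ≤ y` implies `y = x ⊔ (y ⊓ oc x)`. -/
theorem stmt18 {L : Type*} [Lattice L] [BoundedOrder L]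
    (oc : L → L) (sd : L → L → L)
    (h_inv : ∀ x : L, oc (oc x) = x)
    (h_anti : ∀ x y : L, x ≤ y → oc y ≤ oc x)
    (h_compl : ∀ x : L, x ⊓ oc x = ⊥)
    (hGEQL1 : ∀ x y z : L, sd x (sd y z) = sd (sd x y) z)
    (hGEQL2 : ∀ x : L, sd x ⊤ = oc x ∧ sd ⊤ x = oc x)
    (hGEQL3 : ∀ x y z : L, x ≤ z → y ≤ z → sd x y ≤ z) :
    ∀ x y : L, x ≤ y → y = x ⊔ (y ⊓ oc x) := by
  have hsd_top : ∀ x, sd x ⊤ = oc x := fun x => (hGEQL2 x).1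
  have htop_sd : ∀ x, sd ⊤ x = oc x := fun x => (hGEQL2 x).2
  intro x y hxy
  have hd_le_y : sd x y ≤ y := hGEQL3 x y y hxy le_rfl
  have hd_le_oc : sd x y ≤ oc x := by
    rw [← sd_oc_oc oc sd h_inv hGEQL1 hsd_top htop_sd]
    exact hGEQL3 _ _ _ le_rfl (h_anti x y hxy)
  have hy : y = sd x (sd x y) := by
    rw [hGEQL1, sd_self oc sd h_inv h_compl hGEQL1 hsd_top htop_sd hGEQL3,
      sd_bot_left oc sd h_inv h_compl hGEQL1 htop_sd]
  refine le_antisymm ?_ (sup_le hxy inf_le_left)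
  calc y = sd x (sd x y) := hy
    _ ≤ x ⊔ (y ⊓ oc x) :=
      hGEQL3 _ _ _ le_sup_left (le_sup_of_le_right (le_inf hd_le_y hd_le_oc))
end
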